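/- For every n ≥ 1, dsf(2n+1) + dsf(8n+1) is odd. -/
import Mathlib


def dsf : ℕ → ℕ
  | 0 => 0
  | 1 => 0
  | 2 => 0
  | 3 => 1
  | n + 4 => if (n + 4) % 2 = 0 then dsf ((n + 4) / 2) else dsf (n + 3) + dsf (n + 2)
decreasing_by all_goals omega

lemma dsf_two_mul (n : ℕ) (h : 2 ≤ n) : dsf (2 * n) = dsf n := by
  obtain ⟨m, rfl⟩ : ∃ m, n = m + 2 := ⟨n - 2, by omega⟩
  rw [show 2 * (m + 2) = 2 * m + 4 by ring, dsf]
  have h0 : (2 * m + 4) % 2 = 0 := by omega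
  simp only [h0, if_true]
  congr 1
  omega

lemma dsf_odd_rec (n : ℕ) (h : 2 ≤ n) :
    dsf (2 * n + 1) = dsf (2 * n) + dsf (2 * n - 1) := by
  obtain ⟨m, rfl⟩ : ∃ m, n = m + 2 := ⟨n - 2, by omega⟩
  rw [show 2 * (m + 2) + 1 = (2 * m + 1) + 4 by ring, dsf]
  have h1 : ¬ ((2 * m + 1 + 4) % 2 = 0) := by omega
  simp only [h1, if_false]
  have a : 2 * m + 1 + 3 = 2 * (m + 2) := by omega
  have b : 2 * m + 1 + 2 = 2 * (m + 2) - 1 := by omega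
  rw [a, b]

def T (n : ℕ) : ℕ := ∑ j ∈ Finset.Icc 2 n, dsf j

lemma T_succ (n : ℕ) (h : 1 ≤ n) : T (n + 1) = T n + dsf (n + 1) := by
  unfold T
  rw [Finset.sum_Icc_succ_top (by omega : 2 ≤ n + 1)]

lemma dsf_odd_parity : ∀ k, 1 ≤ k → dsf (2 * k + 1) % 2 = (1 + T k) % 2 := by
  intro k hk
  induction k, hk using Nat.le_induction with
  | base =>
      show dsf 3 % 2 = (1 + T 1) % 2
      have : T 1 = 0 := by unfold T; simp
      rw [this, dsf]
  | succ k hk ih =>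
      have h1 : dsf (2 * (k + 1) + 1) = dsf (2 * (k + 1)) + dsf (2 * (k + 1) - 1) :=
        dsf_odd_rec (k + 1) (by omega)
      have h2 : dsf (2 * (k + 1)) = dsf (k + 1) := dsf_two_mul (k + 1) (by omega)
      have h3 : 2 * (k + 1) - 1 = 2 * k + 1 := by omega
      have h4 : T (k + 1) = T k + dsf (k + 1) := T_succ k hk
      rw [h1, h2, h3, h4]
      omega

lemma T_invariant : ∀ n, 1 ≤ n → (T (4 * n) + T n) % 2 = 1 := by
  intro n hn
  induction n, hn using Nat.le_induction with
  | base =>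
      show (T 4 + T 1) % 2 = 1
      have h1 : T 1 = 0 := by unfold T; simp
      have h4 : T 4 = dsf 2 + dsf 3 + dsf 4 := by
        unfold T
        rw [show Finset.Icc 2 4 = {2, 3, 4} from rfl]
        simp [Finset.sum_insert, Nat.add_assoc]
      have hd4 : dsf 4 = dsf 2 := by
        have := dsf_two_mul 2 (by omega)
        simpa using this
      rw [h1, h4, hd4, dsf, dsf]
  | succ n hn ih =>
      have e1 : T (4 * n + 1) = T (4 * n) + dsf (4 * n + 1) := T_succ _ (by omega)
      have e2 : T (4 * n + 2) = T (4 * n + 1) + dsf (4 * n + 2) := T_succ _ (by omega)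
      have e3 : T (4 * n + 3) = T (4 * n + 2) + dsf (4 * n + 3) := T_succ _ (by omega)
      have e4 : T (4 * n + 4) = T (4 * n + 3) + dsf (4 * n + 4) := T_succ _ (by omega)
      have e5 : T (n + 1) = T n + dsf (n + 1) := T_succ _ (by omega)
      have h3 : dsf (4 * n + 3) = dsf (4 * n + 2) + dsf (4 * n + 1) := by
        have := dsf_odd_rec (2 * n + 1) (by omega)
        rw [show 2 * (2 * n + 1) = 4 * n + 2 by ring] at this
        rw [show 4 * n + 2 + 1 = 4 * n + 3 by ring,
            show 4 * n + 2 - 1 = 4 * n + 1 by omega] at this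
        exact this
      have h4 : dsf (4 * n + 4) = dsf (n + 1) := by
        have a1 := dsf_two_mul (2 * n + 2) (by omega)
        have a2 := dsf_two_mul (n + 1) (by omega)
        rw [show 2 * (2 * n + 2) = 4 * n + 4 by ring] at a1
        rw [show 2 * (n + 1) = 2 * n + 2 by ring] at a2
        rw [a1, a2]
      have goal_eq : 4 * (n + 1) = 4 * n + 4 := by ring
      rw [goal_eq]
      omega

theorem dsf_odd (n : ℕ) (hn : 1 ≤ n) : Odd (dsf (2 * n + 1) + dsf (8 * n + 1)) := by
  have p1 := dsf_odd_parity n hn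
  have p2 := dsf_odd_parity (4 * n) (by omega)
  rw [show 2 * (4 * n) + 1 = 8 * n + 1 by ring] at p2
  have p3 := T_invariant n hn
  rw [Nat.odd_iff]
  omega
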